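/- arXiv:0810.4504 — 4 statements merged into one kernel-verified Lean document; each statement's English description precedes it below -/
import Mathlib

section
/- For any finite partition P of a probability space and any element A of P, the Shannon entropy satisfies H(P) ≤ (1 - μ(A))·log₂(#P) + 1. -/
open MeasureTheory

lemma aux_jensen {ι : Type*} (t : Finset ι) (p : ι → ℝ) (hp : ∀ i ∈ t, 0 ≤ p i) :
    ∑ i ∈ t, Real.negMulLog (p i) ≤
      Real.negMulLog (∑ i ∈ t, p i) + (∑ i ∈ t, p i) * Real.log t.card := by
  rcases Finset.eq_empty_or_nonempty t with rfl | ht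
  · simp
  have hm : (0:ℝ) < t.card := by exact_mod_cast Finset.card_pos.2 ht
  set s := ∑ i ∈ t, p i with hs
  have hs0 : 0 ≤ s := Finset.sum_nonneg hp
  rcases eq_or_lt_of_le hs0 with h0 | hspos
  · have : ∀ i ∈ t, p i = 0 := by
      intro i hi
      exact (Finset.sum_eq_zero_iff_of_nonneg hp).1 h0.symm i hi
    rw [← h0]
    rw [Finset.sum_congr rfl (fun i hi => by rw [this i hi])]
    simp
  have hj := Real.concaveOn_negMulLog.le_map_sum (t := t)
      (w := fun _ => ((t.card : ℝ))⁻¹) (p := p)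
      (fun i _ => by positivity)
      (by
        rw [Finset.sum_const, nsmul_eq_mul]
        field_simp)
      (fun i hi => Set.mem_Ici.2 (hp i hi))
  simp only [smul_eq_mul, ← Finset.mul_sum] at hj
  have hkey : (t.card : ℝ) * Real.negMulLog ((t.card : ℝ)⁻¹ * s)
      = Real.negMulLog s + s * Real.log t.card := by
    unfold Real.negMulLog
    rw [Real.log_mul (by positivity) (ne_of_gt hspos), Real.log_inv]
    field_simp
    ring
  calc ∑ i ∈ t, Real.negMulLog (p i)
      = (t.card : ℝ) * ((t.card : ℝ)⁻¹ * ∑ i ∈ t, Real.negMulLog (p i)) := by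
        field_simp
    _ ≤ (t.card : ℝ) * Real.negMulLog ((t.card : ℝ)⁻¹ * s) := by
        exact mul_le_mul_of_nonneg_left hj (le_of_lt hm)
    _ = Real.negMulLog s + s * Real.log t.card := hkey

/-- For a finite measurable partition `P` of a probability space and any `A ∈ P`,
the Shannon entropy `H(P) = -∑_{B∈P} μ(B) log₂ μ(B)` satisfies
`H(P) ≤ (1 - μ(A))·log₂(#P) + 1`. -/
theorem stmt1 {X : Type*} [MeasurableSpace X] (μ : Measure X) [IsProbabilityMeasure μ]
    (P : Finset (Set X)) (hmeas : ∀ B ∈ P, MeasurableSet B)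
    (hdisj : ∀ B ∈ P, ∀ C ∈ P, B ≠ C → Disjoint B C)
    (hcover : ⋃ B ∈ P, B = Set.univ)
    (A : Set X) (hA : A ∈ P) :
    -∑ B ∈ P, (μ B).toReal * Real.logb 2 (μ B).toReal
      ≤ (1 - (μ A).toReal) * Real.logb 2 (P.card) + 1 := by
  classical
  -- total measure is 1
  have hsum1 : ∑ B ∈ P, (μ B).toReal = 1 := by
    have h1 : μ (⋃ B ∈ P, B) = ∑ B ∈ P, μ B := by
      apply measure_biUnion_finset _ hmeas
      intro B hB C hC hne
      exact hdisj B hB C hC hne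
    rw [hcover, measure_univ] at h1
    rw [← ENNReal.toReal_sum (fun B _ => measure_ne_top μ B), ← h1]
    simp
  set p := (μ A).toReal with hp
  have hp0 : 0 ≤ p := ENNReal.toReal_nonneg
  have hnonneg : ∀ B ∈ P, 0 ≤ (μ B).toReal := fun B _ => ENNReal.toReal_nonneg
  have hq : ∑ B ∈ P.erase A, (μ B).toReal = 1 - p := by
    have := Finset.add_sum_erase P (fun B => (μ B).toReal) hA
    linarith [this.trans hsum1]
  have hq0 : 0 ≤ 1 - p := by
    rw [← hq]; exact Finset.sum_nonneg fun B hB => hnonneg B (Finset.mem_erase.1 hB).2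
  have hp1 : p ≤ 1 := by linarith
  -- rewrite goal in terms of negMulLog and natural log
  have hlog2 : (0:ℝ) < Real.log 2 := Real.log_pos (by norm_num)
  have hrw : -∑ B ∈ P, (μ B).toReal * Real.logb 2 (μ B).toReal
      = (∑ B ∈ P, Real.negMulLog ((μ B).toReal)) / Real.log 2 := by
    rw [Finset.sum_div, ← Finset.sum_neg_distrib]
    refine Finset.sum_congr rfl fun B _ => ?_
    rw [Real.negMulLog, Real.logb]
    field_simp
  rw [hrw, Real.logb, div_le_iff₀ hlog2]
  -- main chain
  have hsplit : ∑ B ∈ P, Real.negMulLog ((μ B).toReal)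
      = Real.negMulLog p + ∑ B ∈ P.erase A, Real.negMulLog ((μ B).toReal) := by
    exact (Finset.add_sum_erase P (fun B => Real.negMulLog ((μ B).toReal)) hA).symm
  have hjensen := aux_jensen (P.erase A) (fun B => (μ B).toReal)
      (fun B hB => hnonneg B (Finset.mem_erase.1 hB).2)
  rw [hq] at hjensen
  -- binary entropy bound : negMulLog p + negMulLog (1-p) ≤ log 2
  have hbin : Real.negMulLog p + Real.negMulLog (1 - p) ≤ Real.log 2 := by
    have hc := Real.concaveOn_negMulLog.2 (Set.mem_Ici.2 hp0) (Set.mem_Ici.2 hq0)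
        (by norm_num : (0:ℝ) ≤ (1/2:ℝ)) (by norm_num : (0:ℝ) ≤ (1/2:ℝ)) (by norm_num)
    simp only [smul_eq_mul] at hc
    have : (1/2:ℝ) * p + (1/2:ℝ) * (1 - p) = 1/2 := by ring
    rw [this] at hc
    have hhalf : Real.negMulLog (1/2) = (1/2) * Real.log 2 := by
      rw [Real.negMulLog]
      rw [show Real.log (1/2) = -Real.log 2 by
        rw [one_div, Real.log_inv]]
      ring
    rw [hhalf] at hc
    linarith
  -- log of card bound
  have hcard : Real.log ((P.erase A).card) ≤ Real.log (P.card) := by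
    rcases Nat.eq_zero_or_pos (P.erase A).card with h0 | hpos
    · rw [h0]
      simp only [Nat.cast_zero, Real.log_zero]
      apply Real.log_nonneg
      exact_mod_cast Nat.one_le_iff_ne_zero.2 (Finset.card_ne_zero_of_mem hA)
    · apply Real.log_le_log (by exact_mod_cast hpos)
      exact_mod_cast Finset.card_le_card (Finset.erase_subset A P)
  have hlast : (1 - p) * Real.log ((P.erase A).card) ≤ (1 - p) * Real.log (P.card) :=
    mul_le_mul_of_nonneg_left hcard hq0
  calc ∑ B ∈ P, Real.negMulLog ((μ B).toReal)
      = Real.negMulLog p + ∑ B ∈ P.erase A, Real.negMulLog ((μ B).toReal) := hsplit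
    _ ≤ Real.negMulLog p + (Real.negMulLog (1 - p) + (1 - p) * Real.log ((P.erase A).card)) := by
        linarith
    _ ≤ Real.log 2 + (1 - p) * Real.log (P.card) := by linarith
    _ = ((1 - p) * (Real.log (P.card) / Real.log 2) + 1) * Real.log 2 := by
        field_simp
        ring
end

section
/- The functions g_p(t) = min{1, (1 - e_p^{-t})/log(e_p) + p·t}, where e_p = (1-p)^{-1/p}, converge uniformly on [0,∞) to 1 - e^{-t} as p → 0⁺. In particular, for every ε > 0 there exists δ > 0 such that for all p ∈ (0, δ] and all t ≥ 0, g_p(t) ≤ 1 - e^{-t} + ε. -/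
/-!
Write `L = log e_p = -log (1 - p) / p`, so that `e_p^{-t} = e^{-Lt}`. The bounds
`1 ≤ L ≤ 1 + 2p` (for `p ≤ 1/2`) and `e^{-t} - e^{-Lt} ≤ (L - 1) t e^{-t} ≤ L - 1` show
that `(1 - e^{-Lt})/L` is within `2p` of `1 - e^{-t}`. The drift term `p t` is harmless
because of the cap at `1`: the excess of `g_p(t)` over `1 - e^{-t}` is at most
`min (e^{-t}) (p (2 + t))`, whose square is at most `p (2 + t) e^{-t} ≤ 2p`.
-/

open Real

noncomputable section

namespace UniformLimitGp

def ep (p : ℝ) : ℝ := (1 - p) ^ (-(1 / p) : ℝ)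

def g (p t : ℝ) : ℝ := min 1 ((1 - ep p ^ (-t : ℝ)) / log (ep p) + p * t)

variable {p t L : ℝ}

lemma log_ep (hp1 : p < 1) : log (ep p) = -log (1 - p) / p := by
  rw [ep, log_rpow (by linarith)]
  ring

lemma ep_rpow_neg (hp1 : p < 1) (t : ℝ) : ep p ^ (-t) = exp (-(log (ep p) * t)) := by
  have hep : 0 < ep p := rpow_pos_of_pos (by linarith) _
  rw [rpow_def_of_pos hep]
  ring_nf

lemma one_le_log_ep (hp0 : 0 < p) (hp1 : p < 1) : 1 ≤ log (ep p) := by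
  rw [log_ep hp1, le_div_iff₀ hp0]
  linarith [log_le_sub_one_of_pos (show 0 < 1 - p by linarith)]

lemma log_ep_le (hp0 : 0 < p) (hp : p ≤ 1 / 2) : log (ep p) ≤ 1 + 2 * p := by
  have h1p : 0 < 1 - p := by linarith
  have hlog : -log (1 - p) ≤ p / (1 - p) := by
    have := one_sub_inv_le_log_of_pos h1p
    rw [show 1 - (1 - p)⁻¹ = -(p / (1 - p)) by field_simp; ring] at this
    linarith
  have hfrac : p / (1 - p) ≤ (1 + 2 * p) * p := by
    rw [div_le_iff₀ h1p]
    nlinarith [mul_nonneg (mul_nonneg hp0.le hp0.le) (by linarith : (0 : ℝ) ≤ 1 - 2 * p)]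
  rw [log_ep (by linarith), div_le_iff₀ hp0]
  linarith

lemma one_add_mul_exp_neg_le_one (t : ℝ) : (1 + t) * exp (-t) ≤ 1 := by
  calc (1 + t) * exp (-t) ≤ exp t * exp (-t) :=
        mul_le_mul_of_nonneg_right (by linarith [add_one_le_exp t]) (exp_pos _).le
    _ = 1 := by rw [← exp_add, add_neg_cancel, exp_zero]

lemma exp_neg_sub_exp_neg_mul_le (hL : 1 ≤ L) (t : ℝ) :
    exp (-t) - exp (-(L * t)) ≤ L - 1 := by
  have hsplit : exp (-(L * t)) = exp (-t) * exp (-((L - 1) * t)) := by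
    rw [← exp_add]; ring_nf
  have hlin : 1 - exp (-((L - 1) * t)) ≤ (L - 1) * t := by
    linarith [add_one_le_exp (-((L - 1) * t))]
  calc exp (-t) - exp (-(L * t)) = exp (-t) * (1 - exp (-((L - 1) * t))) := by
        rw [hsplit]; ring
    _ ≤ exp (-t) * ((L - 1) * t) := mul_le_mul_of_nonneg_left hlin (exp_pos _).le
    _ = (L - 1) * (t * exp (-t)) := by ring
    _ ≤ (L - 1) * 1 := by
        gcongr
        nlinarith [one_add_mul_exp_neg_le_one t, exp_pos (-t)]
    _ = L - 1 := mul_one _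

lemma abs_one_sub_exp_neg_mul_div_sub_le (hL : 1 ≤ L) (ht : 0 ≤ t) :
    |(1 - exp (-(L * t))) / L - (1 - exp (-t))| ≤ L - 1 := by
  have hL0 : 0 < L := by linarith
  have hexp_pos := exp_pos (-t)
  have hexp_le : exp (-t) ≤ 1 := exp_le_one_iff.mpr (by linarith)
  have hexpL_le : exp (-(L * t)) ≤ exp (-t) := exp_le_exp.mpr (by nlinarith)
  rw [abs_le]
  constructor
  · rw [le_sub_iff_add_le, le_div_iff₀ hL0]
    nlinarith [mul_le_mul_of_nonneg_right (by linarith : 1 - exp (-t) ≤ 1)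
      (by linarith : (0 : ℝ) ≤ L - 1)]
  · have : (1 - exp (-(L * t))) / L ≤ 1 - exp (-(L * t)) :=
      div_le_self (by linarith) hL
    linarith [exp_neg_sub_exp_neg_mul_le hL t]

lemma abs_min_one_add_sub_le {f h q η : ℝ} (hf : f ≤ 1) (hh : |h - f| ≤ η) (hq : 0 ≤ q) :
    |min 1 (h + q) - f| ≤ max η (min (1 - f) (η + q)) := by
  rw [abs_le] at hh ⊢
  constructor
  · have : f - η ≤ min 1 (h + q) := le_min (by linarith) (by linarith)
    linarith [le_max_left η (min (1 - f) (η + q))]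
  · rw [← min_sub_sub_right]
    exact (min_le_min le_rfl (by linarith)).trans (le_max_right _ _)

lemma min_exp_neg_sq_le (hp : 0 ≤ p) (ht : 0 ≤ t) :
    min (exp (-t)) (2 * p + p * t) ^ 2 ≤ 2 * p := by
  calc min (exp (-t)) (2 * p + p * t) ^ 2 ≤ exp (-t) * (2 * p + p * t) := by
        rw [sq]
        exact mul_le_mul (min_le_left _ _) (min_le_right _ _)
          (le_min (exp_pos _).le (by positivity)) (exp_pos _).le
    _ ≤ 2 * p * ((1 + t) * exp (-t)) := by nlinarith [exp_pos (-t), mul_nonneg hp ht]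
    _ ≤ 2 * p * 1 := by gcongr; exact one_add_mul_exp_neg_le_one t
    _ = 2 * p := mul_one _

theorem abs_g_sub_le (hp0 : 0 < p) (hp : p ≤ 1 / 2) (ht : 0 ≤ t) :
    |g p t - (1 - exp (-t))| ≤ max (2 * p) (min (exp (-t)) (2 * p + p * t)) := by
  have hL := one_le_log_ep hp0 (by linarith)
  have hclose : |(1 - ep p ^ (-t)) / log (ep p) - (1 - exp (-t))| ≤ 2 * p := by
    rw [ep_rpow_neg (by linarith)]
    linarith [abs_one_sub_exp_neg_mul_div_sub_le hL ht, log_ep_le hp0 hp]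
  have := abs_min_one_add_sub_le (by linarith [exp_pos (-t)]) hclose
    (mul_nonneg hp0.le ht)
  rwa [sub_sub_cancel] at this

end UniformLimitGp

end

open UniformLimitGp in
/-- The functions `g_p(t) = min{1, (1 - e_p^{-t})/log e_p + p·t}` with
`e_p = (1-p)^{-1/p}` converge uniformly on `[0,∞)` to `1 - e^{-t}` as `p → 0⁺`;
in particular `g_p(t) ≤ 1 - e^{-t} + ε` for all small `p` and all `t ≥ 0`. -/
theorem stmt5 :
    ∀ ε : ℝ, 0 < ε → ∃ δ : ℝ, 0 < δ ∧ ∀ p : ℝ, 0 < p → p ≤ δ → p < 1 → ∀ t : ℝ, 0 ≤ t →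
      |min 1 ((1 - ((1 - p) ^ (-(1 / p) : ℝ)) ^ (-t : ℝ)) /
            Real.log ((1 - p) ^ (-(1 / p) : ℝ)) + p * t)
          - (1 - Real.exp (-t))| ≤ ε
      ∧ min 1 ((1 - ((1 - p) ^ (-(1 / p) : ℝ)) ^ (-t : ℝ)) /
            Real.log ((1 - p) ^ (-(1 / p) : ℝ)) + p * t)
          ≤ 1 - Real.exp (-t) + ε := by
  intro ε hε
  refine ⟨min (1 / 2) (min (ε / 2) (ε ^ 2 / 2)), by positivity, ?_⟩
  intro p hp0 hpδ _ t ht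
  have hp : p ≤ 1 / 2 := hpδ.trans (min_le_left _ _)
  have hpε : 2 * p ≤ ε := by linarith [hpδ.trans ((min_le_right _ _).trans (min_le_left _ _))]
  have hpε2 : 2 * p ≤ ε ^ 2 := by
    linarith [hpδ.trans ((min_le_right _ _).trans (min_le_right _ _))]
  have hexcess : min (exp (-t)) (2 * p + p * t) ≤ ε :=
    abs_le_of_sq_le_sq' ((min_exp_neg_sq_le hp0.le ht).trans hpε2) hε.le |>.2
  have hbound : |g p t - (1 - exp (-t))| ≤ ε :=
    (abs_g_sub_le hp0 hp ht).trans (max_le hpε hexcess)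
  exact ⟨hbound, sub_le_iff_le_add'.mp (abs_sub_le_iff.mp hbound).1⟩
end

section
/- Let (X, Σ, μ, T) be an ergodic measure-preserving system and B a set of positive measure. Let F_B be the distribution function of the normalized hitting time μ(B)·V_B (defined μ-a.e. on X) and G_B(t) = ∫₀ᵗ (1 - F̃_B(s)) ds where F̃_B is the distribution function of the normalized return time. Then for every t ≥ 0, G_B(t) - μ(B) ≤ F_B(t) ≤ G_B(t). -/
open MeasureTheory ProbabilityTheory

/-- The first hitting/return time `min{i > 0 : T^i x ∈ B}`. -/
noncomputable def returnTime {X : Type*} (T : X → X) (B : Set X) (x : X) : ℕ :=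
  sInf {i | 0 < i ∧ T^[i] x ∈ B}

/-- Distribution function `F̃_B` of the normalized return time `μ(B)·R_B` on `B`
with the conditional measure `μ_B`. -/
noncomputable def retDF {X : Type*} [MeasurableSpace X] (μ : Measure X) (T : X → X)
    (B : Set X) (t : ℝ) : ℝ :=
  ((ProbabilityTheory.cond μ B)
    {y | (μ B).toReal * (returnTime T B y : ℝ) ≤ t}).toReal

/-- Distribution function `F_B` of the normalized hitting time `μ(B)·V_B` on the
whole space. -/
noncomputable def hitDF {X : Type*} [MeasurableSpace X] (μ : Measure X) (T : X → X)
    (B : Set X) (t : ℝ) : ℝ :=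
  (μ {x | (μ B).toReal * (returnTime T B x : ℝ) ≤ t}).toReal

/-- `G_B(t) = ∫₀ᵗ (1 - F̃_B(s)) ds`. -/
noncomputable def GB {X : Type*} [MeasurableSpace X] (μ : Measure X) (T : X → X)
    (B : Set X) (t : ℝ) : ℝ :=
  ∫ s in (0 : ℝ)..t, (1 - retDF μ T B s)

/-! Write `c = μ B` and `E k` for the set of points whose first `k` iterates avoid `B`. Since
`E (k + 1) = T⁻¹ (E k \ B)`, invariance of `μ` telescopes to `μ (E n) + ∑_{k < n} μ (B ∩ E k) = 1`,
and ergodicity makes the points that never visit `B` null. Hence, almost everywhere,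
`c V_B ≤ t ↔ x ∉ E ⌊t / c⌋`, so `F_B(t) = ∑_{k < n} μ (B ∩ E k)` with `n = ⌊t / c⌋`, while
`1 - F̃_B(s) = μ_B (E ⌊s / c⌋)` is a step function whose integral over `[k c, (k + 1) c]` is
`μ (B ∩ E k)`. So `G_B(t) - F_B(t)` is the integral over the last partial block,
`(t - n c) μ_B (E n) ∈ [0, c]`. -/

section StepFunction

variable {c t : ℝ}

lemma mul_natCast_le_iff_le_floor_div (hc : 0 < c) (ht : 0 ≤ t) (n : ℕ) :
    c * n ≤ t ↔ n ≤ ⌊t / c⌋₊ := by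
  rw [Nat.le_floor_iff (div_nonneg ht hc.le), le_div_iff₀ hc, mul_comm]

lemma floor_div_eq_of_mem_Ico (hc : 0 < c) {k : ℕ} {s : ℝ}
    (hs : s ∈ Set.Ico (k * c) ((k + 1) * c)) : ⌊s / c⌋₊ = k := by
  rw [Nat.floor_eq_iff (div_nonneg (le_trans (by positivity) hs.1) hc.le), le_div_iff₀ hc,
    div_lt_iff₀ hc]
  exact hs

lemma mem_Ico_floor_div_mul (hc : 0 < c) (ht : 0 ≤ t) :
    t ∈ Set.Ico (⌊t / c⌋₊ * c) ((⌊t / c⌋₊ + 1) * c) := by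
  have := (Nat.floor_eq_iff (div_nonneg ht hc.le)).mp rfl
  rwa [le_div_iff₀ hc, div_lt_iff₀ hc] at this

variable (a : ℕ → ℝ) {k : ℕ} {u v : ℝ}

lemma eqOn_floor_div_uIoo (hc : 0 < c) (hu : k * c ≤ u) (huv : u ≤ v) (hv : v ≤ (k + 1) * c) :
    Set.EqOn (fun s => a ⌊s / c⌋₊) (fun _ => a k) (Set.uIoo u v) := by
  intro s hs
  rw [Set.uIoo_of_le huv] at hs
  simp only [floor_div_eq_of_mem_Ico hc ⟨hu.trans hs.1.le, hs.2.trans_le hv⟩]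

lemma intervalIntegrable_floor_div (hc : 0 < c) (hu : k * c ≤ u) (huv : u ≤ v)
    (hv : v ≤ (k + 1) * c) :
    IntervalIntegrable (fun s => a ⌊s / c⌋₊) volume u v :=
  intervalIntegrable_const.congr_uIoo (eqOn_floor_div_uIoo a hc hu huv hv).symm

lemma integral_floor_div_of_le (hc : 0 < c) (hu : k * c ≤ u) (huv : u ≤ v)
    (hv : v ≤ (k + 1) * c) :
    ∫ s in u..v, a ⌊s / c⌋₊ = (v - u) * a k := by
  rw [intervalIntegral.integral_congr_uIoo (eqOn_floor_div_uIoo a hc hu huv hv),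
    intervalIntegral.integral_const, smul_eq_mul]

lemma integral_floor_div (hc : 0 < c) (ht : 0 ≤ t) :
    ∫ s in (0 : ℝ)..t, a ⌊s / c⌋₊ =
      c * ∑ k ∈ Finset.range ⌊t / c⌋₊, a k + (t - ⌊t / c⌋₊ * c) * a ⌊t / c⌋₊ := by
  set n := ⌊t / c⌋₊
  have hn := mem_Ico_floor_div_mul hc ht
  have hblock (k : ℕ) :
      IntervalIntegrable (fun s => a ⌊s / c⌋₊) volume (k * c) ((k + 1 : ℕ) * c) :=
    intervalIntegrable_floor_div a hc le_rfl (by gcongr; simp) (by push_cast; rfl)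
  have hblocks : ∫ s in (0 : ℝ)..n * c, a ⌊s / c⌋₊ = c * ∑ k ∈ Finset.range n, a k := by
    have := intervalIntegral.sum_integral_adjacent_intervals (a := fun k : ℕ => k * c) (n := n)
      fun k _ => hblock k
    simp only [Nat.cast_zero, zero_mul] at this
    rw [← this, Finset.mul_sum]
    refine Finset.sum_congr rfl fun k _ => ?_
    rw [integral_floor_div_of_le a hc le_rfl (by gcongr; simp) (by push_cast; rfl)]
    push_cast; ring
  have hinit : IntervalIntegrable (fun s => a ⌊s / c⌋₊) volume 0 (n * c) := by
    simpa using IntervalIntegrable.trans_iterate (a := fun k : ℕ => k * c) fun k _ => hblock k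
  rw [← intervalIntegral.integral_add_adjacent_intervals hinit
    (intervalIntegrable_floor_div a hc le_rfl hn.1 hn.2.le), hblocks,
    integral_floor_div_of_le a hc le_rfl hn.1 hn.2.le]

end StepFunction

section Visits

variable {X : Type*} {T : X → X} {B : Set X}

def avoidingUpTo (T : X → X) (B : Set X) (k : ℕ) : Set X :=
  {x | ∀ i, 0 < i → i ≤ k → T^[i] x ∉ B}

def neverVisiting (T : X → X) (B : Set X) : Set X :=
  {x | ∀ i, 0 < i → T^[i] x ∉ B}

@[simp]
lemma avoidingUpTo_zero : avoidingUpTo T B 0 = Set.univ :=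
  Set.eq_univ_of_forall fun _ _ hi hi0 => absurd hi (by omega)

lemma avoidingUpTo_succ (k : ℕ) :
    avoidingUpTo T B (k + 1) = T ⁻¹' (avoidingUpTo T B k \ B) := by
  ext x
  simp only [avoidingUpTo, Set.mem_ofPred_eq, Set.mem_preimage, Set.mem_sdiff]
  constructor
  · intro h
    refine ⟨fun j hj hjk => ?_, by simpa using h 1 one_pos (by omega)⟩
    simpa [Function.iterate_succ_apply] using h (j + 1) (by omega) (by omega)
  · rintro ⟨hk, hB⟩ (_ | j) hi hik
    · omega
    rw [Function.iterate_succ_apply]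
    rcases j.eq_zero_or_pos with rfl | hj
    · simpa using hB
    · exact hk j hj (by omega)

lemma neverVisiting_eq_iInter : neverVisiting T B = ⋂ k, avoidingUpTo T B k := by
  ext x
  simp only [neverVisiting, avoidingUpTo, Set.mem_ofPred_eq, Set.mem_iInter]
  exact ⟨fun h _ i hi _ => h i hi, fun h i hi => h i i hi le_rfl⟩

lemma neverVisiting_subset_preimage : neverVisiting T B ⊆ T ⁻¹' neverVisiting T B :=
  fun x hx j hj => by simpa only [Function.iterate_succ_apply] using hx (j + 1) (by omega)

-- Off `neverVisiting T B` the `sInf` defining `returnTime` is attained; on it, it is `sInf ∅ = 0`.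
lemma returnTime_le_iff {x : X} (hx : x ∉ neverVisiting T B) (k : ℕ) :
    returnTime T B x ≤ k ↔ x ∉ avoidingUpTo T B k := by
  have hne : {i | 0 < i ∧ T^[i] x ∈ B}.Nonempty := by
    simpa [neverVisiting, Set.Nonempty] using hx
  obtain ⟨hpos, hmem⟩ := Nat.sInf_mem hne
  simp only [avoidingUpTo, Set.mem_ofPred_eq, not_forall, not_not]
  refine ⟨fun h => ⟨_, hpos, h, hmem⟩, ?_⟩
  rintro ⟨i, hi, hik, hiB⟩
  exact (Nat.sInf_le (s := {i | 0 < i ∧ T^[i] x ∈ B}) ⟨hi, hiB⟩).trans hik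

variable [MeasurableSpace X] {μ : Measure X}

lemma measurableSet_avoidingUpTo (hT : Measurable T) (hB : MeasurableSet B) (k : ℕ) :
    MeasurableSet (avoidingUpTo T B k) := by
  induction k with
  | zero => simp
  | succ k ih => rw [avoidingUpTo_succ]; exact hT (ih.diff hB)

lemma measure_avoidingUpTo_add_sum (hT : MeasurePreserving T μ μ) (hB : MeasurableSet B)
    (n : ℕ) :
    μ (avoidingUpTo T B n) + ∑ k ∈ Finset.range n, μ (B ∩ avoidingUpTo T B k) = μ Set.univ := by
  induction n with
  | zero => simp
  | succ n ih =>
    have hstep : μ (avoidingUpTo T B (n + 1)) + μ (B ∩ avoidingUpTo T B n) =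
        μ (avoidingUpTo T B n) := by
      rw [avoidingUpTo_succ, hT.measure_preimage
        ((measurableSet_avoidingUpTo hT.measurable hB n).diff hB).nullMeasurableSet,
        Set.inter_comm]
      exact measure_sdiff_add_inter _ hB
    rw [Finset.sum_range_succ, ← add_assoc, add_right_comm, hstep, ih]

lemma measure_neverVisiting [IsFiniteMeasure μ] (hT : Ergodic T μ) (hB : MeasurableSet B)
    (hpos : μ B ≠ 0) : μ (neverVisiting T B) = 0 := by
  have hN : MeasurableSet (neverVisiting T B) := by
    rw [neverVisiting_eq_iInter]
    exact .iInter (measurableSet_avoidingUpTo hT.measurable hB)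
  refine (hT.ae_empty_or_univ_of_ae_le_preimage hN.nullMeasurableSet
    neverVisiting_subset_preimage.eventuallyLE).elim ae_eq_empty.mp fun huniv => ?_
  have hdisj : T ⁻¹' B ⊆ (neverVisiting T B)ᶜ :=
    fun x hx hxN => hxN 1 one_pos (by simpa using hx)
  refine absurd (measure_mono_null hdisj (by simpa using ae_eq_univ.mp huniv)) ?_
  rwa [hT.measure_preimage hB.nullMeasurableSet]

end Visits

section DistributionFunctions

variable {X : Type*} [MeasurableSpace X] {μ : Measure X} [IsProbabilityMeasure μ] {T : X → X}
  {B : Set X} {c t : ℝ}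

lemma setOf_mul_returnTime_le_ae_eq (hT : Ergodic T μ) (hB : MeasurableSet B) (hpos : μ B ≠ 0)
    (hc : 0 < c) (ht : 0 ≤ t) :
    {x | c * (returnTime T B x : ℝ) ≤ t} =ᵐ[μ] (avoidingUpTo T B ⌊t / c⌋₊)ᶜ := by
  filter_upwards [measure_eq_zero_iff_ae_notMem.mp (measure_neverVisiting hT hB hpos)] with x hx
  exact propext ((mul_natCast_le_iff_le_floor_div hc ht _).trans (returnTime_le_iff hx _))

lemma measureReal_setOf_mul_returnTime_le (hT : Ergodic T μ) (hB : MeasurableSet B)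
    (hpos : μ B ≠ 0) (hc : 0 < c) (ht : 0 ≤ t) {ν : Measure X} [IsProbabilityMeasure ν]
    (hν : ν ≪ μ) :
    ν.real {x | c * (returnTime T B x : ℝ) ≤ t} = 1 - ν.real (avoidingUpTo T B ⌊t / c⌋₊) :=
  (measureReal_congr (hν.ae_eq (setOf_mul_returnTime_le_ae_eq hT hB hpos hc ht))).trans
    (probReal_compl_eq_one_sub (measurableSet_avoidingUpTo hT.measurable hB _))

lemma GB_eq_hitDF_add (hT : Ergodic T μ) (hB : MeasurableSet B) (hpos : μ B ≠ 0) (ht : 0 ≤ t) :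
    GB μ T B t = hitDF μ T B t + (t - ⌊t / μ.real B⌋₊ * μ.real B) *
      μ[|B].real (avoidingUpTo T B ⌊t / μ.real B⌋₊) := by
  simp only [GB, retDF, hitDF, ← measureReal_def]
  set c := μ.real B
  set n := ⌊t / c⌋₊
  have hc : 0 < c := ENNReal.toReal_pos hpos (measure_ne_top μ B)
  have := cond_isProbabilityMeasure (μ := μ) hpos
  have hret (s) (hs : s ∈ Set.uIcc 0 t) :
      1 - μ[|B].real {y | c * (returnTime T B y : ℝ) ≤ s} =
        μ[|B].real (avoidingUpTo T B ⌊s / c⌋₊) := by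
    rw [measureReal_setOf_mul_returnTime_le hT hB hpos hc (Set.uIcc_of_le ht ▸ hs).1
      cond_absolutelyContinuous, sub_sub_cancel]
  have hcond (k : ℕ) :
      c * μ[|B].real (avoidingUpTo T B k) = μ.real (B ∩ avoidingUpTo T B k) := by
    simp only [c, measureReal_def]
    rw [← ENNReal.toReal_mul, mul_comm, cond_mul_eq_inter hB]
  have hsum : ∑ k ∈ Finset.range n, μ.real (B ∩ avoidingUpTo T B k) =
      1 - μ.real (avoidingUpTo T B n) := by
    have := congrArg ENNReal.toReal (measure_avoidingUpTo_add_sum hT.toMeasurePreserving hB n)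
    rw [ENNReal.toReal_add (measure_ne_top _ _)
      (ENNReal.sum_ne_top.mpr fun _ _ => measure_ne_top _ _),
      ENNReal.toReal_sum fun _ _ => measure_ne_top _ _, measure_univ, ENNReal.toReal_one] at this
    simp only [measureReal_def]
    linarith
  rw [intervalIntegral.integral_congr hret,
    integral_floor_div (fun k => μ[|B].real (avoidingUpTo T B k)) hc ht, Finset.mul_sum,
    Finset.sum_congr rfl fun k _ => hcond k, hsum,
    measureReal_setOf_mul_returnTime_le hT hB hpos hc ht Measure.AbsolutelyContinuous.rfl]

end DistributionFunctions

/-- In an ergodic system, `G_B(t) - μ(B) ≤ F_B(t) ≤ G_B(t)` for every `t ≥ 0`. -/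
theorem stmt7 {X : Type*} [MeasurableSpace X] (μ : Measure X) [IsProbabilityMeasure μ]
    (T : X → X) (hT : Ergodic T μ) (B : Set X) (hB : MeasurableSet B) (hpos : 0 < μ B) :
    ∀ t : ℝ, 0 ≤ t →
      GB μ T B t - (μ B).toReal ≤ hitDF μ T B t ∧ hitDF μ T B t ≤ GB μ T B t := by
  intro t ht
  have hc : 0 < μ.real B := ENNReal.toReal_pos hpos.ne' (measure_ne_top μ B)
  have := cond_isProbabilityMeasure (μ := μ) hpos.ne'
  have hn := mem_Ico_floor_div_mul hc ht
  set p := μ[|B].real (avoidingUpTo T B ⌊t / μ.real B⌋₊)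
  have herr_nonneg : 0 ≤ (t - ⌊t / μ.real B⌋₊ * μ.real B) * p :=
    mul_nonneg (sub_nonneg.2 hn.1) measureReal_nonneg
  have herr_le : (t - ⌊t / μ.real B⌋₊ * μ.real B) * p ≤ μ.real B :=
    (mul_le_of_le_one_right (sub_nonneg.2 hn.1) measureReal_le_one).trans (by linarith [hn.2])
  rw [← measureReal_def, GB_eq_hitDF_add hT hB hpos.ne' ht]
  constructor <;> linarith
end

section
/- In any ergodic measure-preserving system, the maximal possible intensity of repelling is e^{-1}: for every set B of positive measure and every t ≥ 0, F_B(t) - (1 - e^{-t}) ≤ e^{-1} + μ(B), where F_B is the distribution function of the normalized hitting time. Equivalently, G_B(t) ≤ (1 - e^{-t}) + e^{-1} for all t ≥ 0, since G_B(t) ≤ min{t,1} and min{t,1} - (1 - e^{-t}) ≤ e^{-1} with equality at t = 1. -/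
/-!
Both `F_B(t)` and `G_B(t)` are at most `min t 1`. For `F_B(t) ≤ t`: by ergodicity almost every
point visits `B` at some positive time, so `{μ(B) V_B ≤ t}` is covered up to a null set by the
preimages `T^{-i} B`, `1 ≤ i ≤ t / μ(B)`. For `G_B(t) ≤ 1`: the integrand is antitone, so the
integral is bounded by a left Riemann sum with mesh `μ(B)`, and Kac's telescoping identity
`μ(C_n) = μ(C_n ∩ B) + μ(C_{n+1})` for the sets `C_n` of points avoiding `B` at times `1, …, n`
bounds that sum by `1`. It remains to note `min t 1 - (1 - e^{-t}) ≤ e^{-1}`.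
-/

open MeasureTheory ProbabilityTheory

section AvoidSet

variable {X : Type*} {T : X → X} {B : Set X}

variable (T B) in
def avoidSet (n : ℕ) : Set X := ⋂ i ∈ Finset.Icc 1 n, T^[i] ⁻¹' Bᶜ

lemma mem_avoidSet {n : ℕ} {x : X} : x ∈ avoidSet T B n ↔ ∀ i ∈ Finset.Icc 1 n, T^[i] x ∉ B := by
  simp [avoidSet]

@[simp] lemma avoidSet_zero : avoidSet T B 0 = Set.univ := by simp [avoidSet]

lemma avoidSet_succ (n : ℕ) : avoidSet T B (n + 1) = T ⁻¹' (avoidSet T B n \ B) := by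
  ext x
  simp only [mem_avoidSet, Set.mem_preimage, Set.mem_sdiff, Finset.mem_Icc]
  constructor
  · intro h
    refine ⟨fun i hi => ?_, by simpa using h 1 (by omega)⟩
    rw [← Function.iterate_succ_apply]
    exact h (i + 1) (by omega)
  · rintro ⟨h, h1⟩ (_ | _ | i) hi
    · omega
    · simpa using h1
    · rw [Function.iterate_succ_apply]
      exact h (i + 1) (by omega)

lemma compl_avoidSet (n : ℕ) : (avoidSet T B n)ᶜ = ⋃ i ∈ Finset.Icc 1 n, T^[i] ⁻¹' B := by
  simp [avoidSet]

lemma measurableSet_avoidSet [MeasurableSpace X] (hT : Measurable T) (hB : MeasurableSet B)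
    (n : ℕ) : MeasurableSet (avoidSet T B n) :=
  Finset.measurableSet_biInter _ fun i _ => hB.compl.preimage (hT.iterate i)

lemma setOf_lt_returnTime_subset (n : ℕ) : {x | n < returnTime T B x} ⊆ avoidSet T B n :=
  fun x (hx : n < returnTime T B x) => mem_avoidSet.2 fun i hi hiB =>
    have hτ : returnTime T B x ≤ i := Nat.sInf_le ⟨(Finset.mem_Icc.1 hi).1, hiB⟩
    (Finset.mem_Icc.1 hi).2.not_gt (hx.trans_le hτ)

-- Points that never visit `B` have `returnTime = sInf ∅ = 0`.
lemma setOf_returnTime_le_subset (n : ℕ) :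
    {x | returnTime T B x ≤ n} ⊆ (⋂ k, avoidSet T B k) ∪ (avoidSet T B n)ᶜ := by
  intro x hx
  by_cases hvisit : {i | 0 < i ∧ T^[i] x ∈ B}.Nonempty
  · right
    obtain ⟨hpos, hmem⟩ := Nat.sInf_mem hvisit
    exact fun hx' => mem_avoidSet.1 hx' _ (Finset.mem_Icc.2 ⟨hpos, hx⟩) hmem
  · left
    refine Set.mem_iInter.2 fun k => mem_avoidSet.2 fun i hi hiB => hvisit ?_
    exact ⟨i, (Finset.mem_Icc.1 hi).1, hiB⟩

variable [MeasurableSpace X] {μ : Measure X}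

lemma MeasureTheory.MeasurePreserving.measure_avoidSet (hT : MeasurePreserving T μ μ)
    (hB : MeasurableSet B) (n : ℕ) :
    μ (avoidSet T B n) = μ (avoidSet T B n ∩ B) + μ (avoidSet T B (n + 1)) := by
  rw [avoidSet_succ, hT.measure_preimage
    ((measurableSet_avoidSet hT.measurable hB n).diff hB).nullMeasurableSet,
    measure_inter_add_sdiff _ hB]

lemma MeasureTheory.MeasurePreserving.sum_measure_avoidSet_inter_add
    (hT : MeasurePreserving T μ μ) (hB : MeasurableSet B) (M : ℕ) :
    ∑ n ∈ Finset.range M, μ (avoidSet T B n ∩ B) + μ (avoidSet T B M) = μ Set.univ := by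
  induction M with
  | zero => simp
  | succ M ih => rw [Finset.sum_range_succ, add_assoc, ← hT.measure_avoidSet hB, ih]

lemma Ergodic.measure_iInter_avoidSet [IsFiniteMeasure μ] (hT : Ergodic T μ)
    (hB : MeasurableSet B) (hB0 : μ B ≠ 0) : μ (⋂ k, avoidSet T B k) = 0 := by
  set F := ⋂ k, avoidSet T B k
  have hF : MeasurableSet F := .iInter (measurableSet_avoidSet hT.measurable hB)
  have hmem_succ (x : X) (hx : x ∈ F) (n : ℕ) : T x ∈ avoidSet T B n \ B := by
    have := Set.mem_iInter.1 hx (n + 1)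
    rwa [avoidSet_succ] at this
  have hFT : F ⊆ T ⁻¹' F := fun x hx => Set.mem_iInter.2 fun n => (hmem_succ x hx n).1
  rcases hT.ae_empty_or_univ_of_ae_le_preimage hF.nullMeasurableSet hFT.eventuallyLE with h | h
  · exact ae_eq_empty.1 h
  · have hFB : T ⁻¹' B ⊆ Fᶜ := fun x hxB hx => (hmem_succ x hx 0).2 hxB
    have := measure_mono_null hFB (ae_eq_univ.1 h)
    exact absurd (hT.measure_preimage hB.nullMeasurableSet ▸ this) hB0

lemma Ergodic.measure_setOf_returnTime_le [IsFiniteMeasure μ] (hT : Ergodic T μ)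
    (hB : MeasurableSet B) (hB0 : μ B ≠ 0) (n : ℕ) :
    μ {x | returnTime T B x ≤ n} ≤ n * μ B :=
  calc μ {x | returnTime T B x ≤ n}
      ≤ μ (⋂ k, avoidSet T B k) + μ (avoidSet T B n)ᶜ :=
        (measure_mono (setOf_returnTime_le_subset n)).trans (measure_union_le _ _)
    _ = μ (⋃ i ∈ Finset.Icc 1 n, T^[i] ⁻¹' B) := by
        rw [hT.measure_iInter_avoidSet hB hB0, zero_add, compl_avoidSet]
    _ ≤ ∑ i ∈ Finset.Icc 1 n, μ (T^[i] ⁻¹' B) := measure_biUnion_finset_le _ _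
    _ = n * μ B := by
        simp [(hT.toMeasurePreserving.iterate _).measure_preimage hB.nullMeasurableSet]

end AvoidSet

lemma Antitone.intervalIntegral_le_mul_sum {f : ℝ → ℝ} (hf : Antitone f) (hf0 : ∀ s, 0 ≤ f s)
    {h t : ℝ} (hh : 0 < h) (ht : 0 ≤ t) {M : ℕ} (htM : t ≤ h * M) :
    ∫ s in (0 : ℝ)..t, f s ≤ h * ∑ n ∈ Finset.range M, f (h * n) := by
  have hfh : Antitone fun u => f (h * u) := hf.comp_monotone (monotone_mul_left_of_nonneg hh.le)
  calc ∫ s in (0 : ℝ)..t, f s ≤ ∫ s in (0 : ℝ)..h * M, f s :=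
        intervalIntegral.integral_mono_interval le_rfl ht htM
          (Filter.Eventually.of_forall hf0) hf.intervalIntegrable
    _ = h * ∫ u in (0 : ℝ)..M, f (h * u) := by
        rw [intervalIntegral.integral_comp_mul_left _ hh.ne', smul_eq_mul, mul_zero,
          mul_inv_cancel_left₀ hh.ne']
    _ ≤ h * ∑ n ∈ Finset.range M, f (h * n) := by
        gcongr
        simpa using AntitoneOn.integral_le_sum (x₀ := 0) (a := M) (hfh.antitoneOn _)

lemma min_sub_one_sub_exp_le {t : ℝ} (ht : 0 ≤ t) :
    min t 1 - (1 - Real.exp (-t)) ≤ Real.exp (-1) := by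
  rcases le_total t 1 with h | h
  · rw [min_eq_left h]
    have hexp : Real.exp (-t) ≤ 1 := Real.exp_le_one_iff.2 (by linarith)
    have hexp' : Real.exp (t - 1) ≤ 1 := Real.exp_le_one_iff.2 (by linarith)
    have := Real.add_one_le_exp (t - 1)
    calc t - (1 - Real.exp (-t)) = Real.exp (-t) * (1 - Real.exp (t - 1)) + t - 1 + Real.exp (-1) := by
          rw [mul_sub, mul_one, ← Real.exp_add]; ring_nf
      _ ≤ 1 * (1 - Real.exp (t - 1)) + t - 1 + Real.exp (-1) := by gcongr
      _ ≤ Real.exp (-1) := by linarith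
  · rw [min_eq_right h]
    linarith [Real.exp_le_exp.2 (neg_le_neg h)]

section DistributionFunctions

variable {X : Type*} [MeasurableSpace X] {μ : Measure X} {T : X → X} {B : Set X}

lemma hitDF_le_one [IsProbabilityMeasure μ] (t : ℝ) : hitDF μ T B t ≤ 1 :=
  ENNReal.toReal_le_of_le_ofReal zero_le_one (by simpa using prob_le_one)

lemma hitDF_le_self [IsFiniteMeasure μ] (hT : Ergodic T μ) (hB : MeasurableSet B)
    (hB0 : μ B ≠ 0) {t : ℝ} (ht : 0 ≤ t) : hitDF μ T B t ≤ t := by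
  set m := (μ B).toReal
  have hm : 0 < m := ENNReal.toReal_pos hB0 (measure_ne_top μ B)
  set N := ⌊t / m⌋₊
  have hsub : {x | m * returnTime T B x ≤ t} ⊆ {x | returnTime T B x ≤ N} := fun x hx =>
    Nat.le_floor ((le_div_iff₀ hm).2 (by rw [mul_comm]; exact hx))
  calc hitDF μ T B t ≤ (N * μ B).toReal := ENNReal.toReal_mono (by finiteness)
        ((measure_mono hsub).trans (hT.measure_setOf_returnTime_le hB hB0 N))
    _ = N * m := by simp [m, ENNReal.toReal_mul]
    _ ≤ t := (le_div_iff₀ hm).1 (Nat.floor_le (by positivity))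

lemma antitone_one_sub_retDF : Antitone fun s => 1 - retDF μ T B s := fun _ _ hst =>
  sub_le_sub_left (ENNReal.toReal_mono (measure_ne_top _ _)
    (measure_mono fun _ hy => le_trans hy hst)) 1

lemma one_sub_retDF_nonneg (s : ℝ) : 0 ≤ 1 - retDF μ T B s :=
  sub_nonneg.2 (ENNReal.toReal_le_of_le_ofReal zero_le_one (by simpa using prob_le_one))

lemma one_sub_retDF_le [IsFiniteMeasure μ] (hB : MeasurableSet B) (hB0 : μ B ≠ 0) (n : ℕ) :
    1 - retDF μ T B ((μ B).toReal * n) ≤ (μ (avoidSet T B n ∩ B)).toReal / (μ B).toReal := by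
  have := cond_isProbabilityMeasure (μ := μ) hB0
  set S := {y | (μ B).toReal * (returnTime T B y : ℝ) ≤ (μ B).toReal * n}
  have hcover : Set.univ ⊆ S ∪ {x | n < returnTime T B x} := fun x _ => by
    by_cases hx : returnTime T B x ≤ n
    · exact Or.inl (mul_le_mul_of_nonneg_left (by exact_mod_cast hx) ENNReal.toReal_nonneg)
    · exact Or.inr (not_le.1 hx)
  have hsplit : 1 ≤ retDF μ T B ((μ B).toReal * n) + (μ[{x | n < returnTime T B x} | B]).toReal :=
    calc (1 : ℝ) = μ[|B].real Set.univ := by simp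
      _ ≤ μ[|B].real (S ∪ {x | n < returnTime T B x}) := measureReal_mono hcover
      _ ≤ _ := measureReal_union_le _ _
  have htail : μ[{x | n < returnTime T B x} | B] ≤ (μ B)⁻¹ * μ (avoidSet T B n ∩ B) := by
    rw [cond_apply hB, Set.inter_comm]
    gcongr
    exact setOf_lt_returnTime_subset n
  have htail' := ENNReal.toReal_mono (by finiteness) htail
  rw [ENNReal.toReal_mul, ENNReal.toReal_inv, ← div_eq_inv_mul] at htail'
  linarith

lemma GB_le_self {t : ℝ} (ht : 0 ≤ t) : GB μ T B t ≤ t := by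
  have hint : IntervalIntegrable (fun s => 1 - retDF μ T B s) volume 0 t :=
    antitone_one_sub_retDF.intervalIntegrable
  calc GB μ T B t ≤ ∫ _ in (0 : ℝ)..t, (1 : ℝ) :=
        intervalIntegral.integral_mono ht hint intervalIntegrable_const
          fun s => sub_le_self _ ENNReal.toReal_nonneg
    _ = t := by simp

lemma GB_le_one [IsProbabilityMeasure μ] (hT : MeasurePreserving T μ μ) (hB : MeasurableSet B)
    (hB0 : μ B ≠ 0) {t : ℝ} (ht : 0 ≤ t) : GB μ T B t ≤ 1 := by
  set m := (μ B).toReal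
  have hm : 0 < m := ENNReal.toReal_pos hB0 (measure_ne_top μ B)
  set M := ⌈t / m⌉₊
  have hkac : ∑ n ∈ Finset.range M, μ (avoidSet T B n ∩ B) ≤ 1 := by
    rw [← measure_univ (μ := μ), ← hT.sum_measure_avoidSet_inter_add hB M]
    exact le_self_add
  calc GB μ T B t ≤ m * ∑ n ∈ Finset.range M, (1 - retDF μ T B (m * n)) :=
        antitone_one_sub_retDF.intervalIntegral_le_mul_sum one_sub_retDF_nonneg hm ht
          ((div_le_iff₀' hm).1 (Nat.le_ceil _))
    _ ≤ m * ∑ n ∈ Finset.range M, (μ (avoidSet T B n ∩ B)).toReal / m := by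
        gcongr with n
        exact one_sub_retDF_le hB hB0 n
    _ = (∑ n ∈ Finset.range M, μ (avoidSet T B n ∩ B)).toReal := by
        rw [Finset.mul_sum, ENNReal.toReal_sum fun _ _ => measure_ne_top _ _]
        exact Finset.sum_congr rfl fun n _ => mul_div_cancel₀ _ hm.ne'
    _ ≤ 1 := ENNReal.toReal_le_of_le_ofReal zero_le_one (by simpa using hkac)

end DistributionFunctions

/-- The maximal possible intensity of repelling is `e^{-1}`:
`F_B(t) - (1 - e^{-t}) ≤ e^{-1} + μ(B)` and `G_B(t) ≤ (1 - e^{-t}) + e^{-1}`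
for all `t ≥ 0`, and `min{t,1} - (1 - e^{-t}) ≤ e^{-1}`. -/
theorem stmt9 {X : Type*} [MeasurableSpace X] (μ : Measure X) [IsProbabilityMeasure μ]
    (T : X → X) (hT : Ergodic T μ) (B : Set X) (hB : MeasurableSet B) (hpos : 0 < μ B) :
    ∀ t : ℝ, 0 ≤ t →
      hitDF μ T B t - (1 - Real.exp (-t)) ≤ Real.exp (-1) + (μ B).toReal ∧
      GB μ T B t ≤ (1 - Real.exp (-t)) + Real.exp (-1) ∧
      min t 1 - (1 - Real.exp (-t)) ≤ Real.exp (-1) := by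
  intro t ht
  have hexp := min_sub_one_sub_exp_le ht
  have hF : hitDF μ T B t ≤ min t 1 := le_min (hitDF_le_self hT hB hpos.ne' ht) (hitDF_le_one t)
  have hG : GB μ T B t ≤ min t 1 :=
    le_min (GB_le_self ht) (GB_le_one hT.toMeasurePreserving hB hpos.ne' ht)
  exact ⟨by linarith [ENNReal.toReal_nonneg (a := μ B)], by linarith, hexp⟩
end
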